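/- Key Gagliardo–Nirenberg interpolation step: there is a constant C such that for every f ∈ W^{2,2}(T³) ∩ L^∞(T³) and each coordinate direction α, ‖∂_α f‖_{L⁴}² ≤ C ‖f‖_{L^∞} ‖f‖_{W^{2,2}}. -/

import Mathlib

open MeasureTheory

noncomputable section

abbrev V3 := Fin 3 → ℝ

/-- The cube `[0,L]^3`, a fundamental domain for the torus `T^3 = [0,L]^3`. -/
def Q3 (L : ℝ) : Set V3 := Set.univ.pi fun _ => Set.Icc 0 L

/-- Partial derivative `∂_j g` of a scalar function on `ℝ^3`. -/
def pd (j : Fin 3) (g : V3 → ℝ) (x : V3) : ℝ := fderiv ℝ g x (Pi.single j 1)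

/-- `f` is `L`-periodic in each coordinate direction (i.e. a field on the torus). -/
def Periodic3 (L : ℝ) (f : V3 → V3) : Prop :=
  ∀ (x : V3) (i : Fin 3), f (x + Pi.single i L) = f x

/-- Divergence-free vector field: `∑_j ∂_j ξ^j = 0`. -/
def DivFree (ξ : V3 → V3) : Prop := ∀ x : V3, ∑ j : Fin 3, pd j (fun y => ξ y j) x = 0

/-- Lie derivative (Lie bracket) `L_ξ f = (ξ·∇)f − (f·∇)ξ`, componentwise. -/
def lieD (ξ f : V3 → V3) : V3 → V3 := fun x i =>
  ∑ j : Fin 3, (ξ x j * pd j (fun y => f y i) x - f x j * pd j (fun y => ξ y i) x)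

/-- `L²` inner product `⟨f,g⟩ = ∫_{T³} f·g dx` over the fundamental domain. -/
def ipT (L : ℝ) (f g : V3 → V3) : ℝ := ∫ x in Q3 L, ∑ i : Fin 3, f x i * g x i

/-- Zero order (multiplication) operator `(S₂ f)_i = −∑_j (∂_i ξ^j + ∂_j ξ^i) f_j`. -/
def S2op (ξ f : V3 → V3) : V3 → V3 := fun x i =>
  -∑ j : Fin 3, (pd i (fun y => ξ y j) x + pd j (fun y => ξ y i) x) * f x j

/-- Componentwise Laplacian. -/
def lapD (f : V3 → V3) : V3 → V3 := fun x i => ∑ j : Fin 3, pd j (pd j (fun y => f y i)) x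

/-- Sup (L^∞) norm of a vector field. -/
def supN (f : V3 → V3) : ℝ := ⨆ x : V3, ‖f x‖

/-- Sup norm of the gradient. -/
def gradSup (f : V3 → V3) : ℝ := ⨆ x : V3, ‖fderiv ℝ f x‖

/-- `L²` norm over the torus. -/
def l2N (L : ℝ) (f : V3 → V3) : ℝ := Real.sqrt (∫ x in Q3 L, ‖f x‖ ^ 2)

/-- `W^{2,2}` Sobolev norm over the torus. -/
def w22N (L : ℝ) (f : V3 → V3) : ℝ :=
  Real.sqrt (∫ x in Q3 L,
    (‖f x‖ ^ 2 + ‖fderiv ℝ f x‖ ^ 2 + ‖iteratedFDeriv ℝ 2 f x‖ ^ 2))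

/-- `W^{3,2}` Sobolev norm over the torus. -/
def w32N (L : ℝ) (f : V3 → V3) : ℝ :=
  Real.sqrt (∫ x in Q3 L, ∑ k ∈ Finset.range 4, ‖iteratedFDeriv ℝ k f x‖ ^ 2)

/-!
Write `g = ∂_α f`. Integrating by parts once along the period,
`∫ g⁴ = ∫ ∂_α f · g³ = -3 ∫ f g² ∂_α g ≤ 3 ‖f‖_∞ ∫ g² |∂_α² f|`,
and Cauchy–Schwarz bounds the last integral by `‖g‖₄² ‖∂_α² f‖₂`. Dividing by `‖g‖₄²` gives
`‖g‖₄² ≤ 3 ‖f‖_∞ ‖∂_α² f‖₂ ≤ 3 ‖f‖_∞ ‖f‖_{W^{2,2}}`; no boundary terms appear because `f` and all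
its derivatives are periodic, and `‖f‖_∞` is a genuine supremum because a continuous periodic
function is bounded.
-/

open Set Function

theorem Real.sqrt_le_of_le_mul_sqrt {x c : ℝ} (hc : 0 ≤ c) (h : x ≤ c * √x) : √x ≤ c := by
  rcases (Real.sqrt_nonneg x).eq_or_lt with h0 | hpos
  · rwa [← h0]
  · refine le_of_mul_le_mul_right ?_ hpos
    rwa [Real.mul_self_sqrt (Real.sqrt_pos.1 hpos).le]

section Integrals

variable {X : Type*} [MeasurableSpace X] {μ : Measure X}

theorem integral_mul_le_sqrt_mul_sqrt {u w : X → ℝ} (hu0 : 0 ≤ᵐ[μ] u) (hw0 : 0 ≤ᵐ[μ] w)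
    (hu : MemLp u 2 μ) (hw : MemLp w 2 μ) :
    ∫ x, u x * w x ∂μ ≤ √(∫ x, u x ^ 2 ∂μ) * √(∫ x, w x ^ 2 ∂μ) := by
  have h := integral_mul_le_Lp_mul_Lq_of_nonneg Real.HolderConjugate.two_two hu0 hw0
    (by simpa using hu) (by simpa using hw)
  simpa only [Real.rpow_two, ← Real.sqrt_eq_rpow] using h

theorem Continuous.memLp_restrict_of_isCompact [TopologicalSpace X] [OpensMeasurableSpace X]
    [T2Space X] [IsFiniteMeasureOnCompacts μ] {f : X → ℝ} (hf : Continuous f) {s : Set X}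
    (hs : IsCompact s) (p : ENNReal) : MemLp f p (μ.restrict s) := by
  have : IsFiniteMeasure (μ.restrict s) := isFiniteMeasure_restrict.2 hs.measure_lt_top.ne
  obtain ⟨C, hC⟩ := hs.exists_bound_of_continuousOn hf.continuousOn
  exact .of_bound hf.aestronglyMeasurable C (ae_restrict_of_forall_mem hs.measurableSet hC)

end Integrals

section Periodic

variable {ι : Type*} [DecidableEq ι] {L : ℝ}

theorem Function.Periodic.apply_add_single_zsmul {β : Type*} {f : (ι → ℝ) → β} {i : ι}
    (hf : Periodic f (Pi.single i L)) (x : ι → ℝ) (m : ℤ) :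
    f (x + Pi.single i (m • L)) = f x := by
  have hper : Periodic (fun t => f (x + Pi.single i t)) L := fun t => by
    simp only [Pi.single_add, ← add_assoc, hf _]
  simpa using hper.zsmul m 0

theorem exists_mem_Icc_apply_eq_of_periodic [Fintype ι] {β : Type*} {f : (ι → ℝ) → β}
    (hL : 0 < L) (hf : ∀ i, Periodic f (Pi.single i L)) (x : ι → ℝ) :
    ∃ y ∈ Icc 0 fun _ => L, f y = f x := by
  set y : ι → ℝ := fun i => toIcoMod hL 0 (x i)
  have hshift (s : Finset ι) :
      f (y + ∑ i ∈ s, Pi.single i (toIcoDiv hL 0 (x i) • L)) = f y := by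
    induction s using Finset.induction_on with
    | empty => simp
    | insert i s hi ih =>
      rw [Finset.sum_insert hi, add_left_comm, add_comm, (hf i).apply_add_single_zsmul, ih]
  have hx : y + ∑ i, Pi.single i (toIcoDiv hL 0 (x i) • L) = x := by
    ext j
    simp [y, Finset.sum_apply, Pi.single_apply]
  have hy (i : ι) : y i ∈ Ico 0 L := by simpa using toIcoMod_mem_Ico hL 0 (x i)
  exact ⟨y, ⟨fun i => (hy i).1, fun i => (hy i).2.le⟩, by rw [← hx, hshift]⟩

theorem bddAbove_range_abs_of_periodic [Fintype ι] {f : (ι → ℝ) → ℝ} (hL : 0 < L)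
    (hc : Continuous f) (hf : ∀ i, Periodic f (Pi.single i L)) :
    BddAbove (range fun x => |f x|) := by
  refine ((isCompact_Icc (a := (0 : ι → ℝ)) (b := fun _ => L)).image hc.abs).bddAbove.mono ?_
  rintro - ⟨x, rfl⟩
  obtain ⟨y, hy, hfy⟩ := exists_mem_Icc_apply_eq_of_periodic hL hf x
  exact ⟨y, hy, by simp only [hfy]⟩

end Periodic

section Derivatives

variable {E F : Type*} [NormedAddCommGroup E] [NormedSpace ℝ E] [NormedAddCommGroup F]
  [NormedSpace ℝ F]

theorem Function.Periodic.fderiv {g : E → F} {c : E} (hg : Periodic g c) :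
    Periodic (fderiv ℝ g) c := fun x => by
  rw [← fderiv_comp_add_right, show (fun y => g (y + c)) = g from funext hg]

theorem ContDiff.continuous_fderiv_apply_const {g : E → F} (hg : ContDiff ℝ 1 g) (v : E) :
    Continuous fun x => fderiv ℝ g x v :=
  (hg.continuous_fderiv one_ne_zero).clm_apply continuous_const

theorem norm_fderiv_fderiv_apply_le {f : E → F} {x : E}
    (hf : DifferentiableAt ℝ (fderiv ℝ f) x) (v w : E) :
    ‖fderiv ℝ (fun y => fderiv ℝ f y v) x w‖ ≤ ‖iteratedFDeriv ℝ 2 f x‖ * ‖w‖ * ‖v‖ := by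
  have h : fderiv ℝ (fun y => fderiv ℝ f y v) x w = iteratedFDeriv ℝ 2 f x ![w, v] := by
    rw [iteratedFDeriv_two_apply, fderiv_clm_apply hf (differentiableAt_const v)]
    simp
  rw [h]
  simpa [Fin.prod_univ_two, mul_assoc] using (iteratedFDeriv ℝ 2 f x).le_opNorm ![w, v]

end Derivatives

section Box

variable {n : ℕ} {a b : Fin (n + 1) → ℝ} {α : Fin (n + 1)}

theorem Fin.insertNth_eq_insertNth_add_single (s t : ℝ) (y : Fin n → ℝ) :
    (α.insertNth t y : Fin (n + 1) → ℝ) = α.insertNth s y + Pi.single α (t - s) := by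
  ext j
  induction j using Fin.succAboveCases α with
  | x => simp
  | p k => simp [Fin.succAbove_ne]

theorem integral_fderiv_single_eq_zero_of_periodic (hab : a ≤ b) {g : (Fin (n + 1) → ℝ) → ℝ}
    (hg : ContDiff ℝ 1 g) (hper : Periodic g (Pi.single α (b α - a α))) :
    ∫ x in Icc a b, fderiv ℝ g x (Pi.single α 1) = 0 := by
  have hd : Differentiable ℝ g := hg.differentiable one_ne_zero
  have hdiv : (fun x => ∑ i, (if i = α then fderiv ℝ g x else 0) (Pi.single i 1)) =
      fun x => fderiv ℝ g x (Pi.single α 1) := by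
    ext x
    rw [Finset.sum_eq_single α (fun i _ hi => by simp [hi]) (by simp), if_pos rfl]
  -- the divergence theorem for the field `g e_α`: its two faces normal to `e_α` cancel
  have h := integral_divergence_of_hasFDerivAt_off_countable' a b hab
    (fun i => if i = α then g else 0) (fun i x => if i = α then fderiv ℝ g x else 0) ∅
    countable_empty
    (fun i => by split_ifs; exacts [hg.continuous.continuousOn, continuousOn_const])
    (fun x _ i => by split_ifs; exacts [(hd x).hasFDerivAt, hasFDerivAt_const _ _])
    (by rw [hdiv]; exact (hg.continuous_fderiv_apply_const _).integrableOn_Icc)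
  rw [hdiv] at h
  rw [h]
  refine Finset.sum_eq_zero fun i _ => ?_
  split_ifs with hi
  · subst hi
    simp only [Fin.insertNth_eq_insertNth_add_single (a i) (b i), hper _, sub_self]
  · simp

theorem integral_fderiv_single_mul_eq_neg_of_periodic (hab : a ≤ b)
    {u v : (Fin (n + 1) → ℝ) → ℝ} (hu : ContDiff ℝ 1 u) (hv : ContDiff ℝ 1 v)
    (hup : Periodic u (Pi.single α (b α - a α))) (hvp : Periodic v (Pi.single α (b α - a α))) :
    ∫ x in Icc a b, fderiv ℝ u x (Pi.single α 1) * v x =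
      -∫ x in Icc a b, u x * fderiv ℝ v x (Pi.single α 1) := by
  have h := integral_fderiv_single_eq_zero_of_periodic hab (hu.mul hv) (hup.mul hvp)
  simp only [fderiv_fun_mul (hu.differentiable one_ne_zero _) (hv.differentiable one_ne_zero _),
    FunLike.coe_add, FunLike.coe_smul, Pi.add_apply, Pi.smul_apply, smul_eq_mul] at h
  have hi₁ : IntegrableOn (fun x => u x * fderiv ℝ v x (Pi.single α 1)) (Icc a b) :=
    (hu.continuous.mul (hv.continuous_fderiv_apply_const _)).integrableOn_Icc
  have hi₂ : IntegrableOn (fun x => v x * fderiv ℝ u x (Pi.single α 1)) (Icc a b) :=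
    (hv.continuous.mul (hu.continuous_fderiv_apply_const _)).integrableOn_Icc
  rw [integral_add hi₁ hi₂] at h
  simp only [mul_comm (v _)] at h
  linarith

variable {f : (Fin (n + 1) → ℝ) → ℝ}

theorem integral_fderiv_single_pow_four_eq_neg (hab : a ≤ b) (hf : ContDiff ℝ 2 f)
    (hper : Periodic f (Pi.single α (b α - a α))) :
    ∫ x in Icc a b, fderiv ℝ f x (Pi.single α 1) ^ 4 =
      -∫ x in Icc a b, f x * (3 * fderiv ℝ f x (Pi.single α 1) ^ 2 *
        fderiv ℝ (fun y => fderiv ℝ f y (Pi.single α 1)) x (Pi.single α 1)) := by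
  set g := fun x => fderiv ℝ f x (Pi.single α 1)
  have hg : ContDiff ℝ 1 g := (hf.fderiv_right le_rfl).clm_apply contDiff_const
  have hgper : Periodic g (Pi.single α (b α - a α)) := fun x => by simp only [g, hper.fderiv x]
  have hcube (x) : fderiv ℝ (fun y => g y ^ 3) x (Pi.single α 1) =
      3 * g x ^ 2 * fderiv ℝ g x (Pi.single α 1) := by
    rw [fderiv_fun_pow 3 (hg.differentiable one_ne_zero x)]
    simp
  calc ∫ x in Icc a b, g x ^ 4 = ∫ x in Icc a b, fderiv ℝ f x (Pi.single α 1) * g x ^ 3 :=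
        integral_congr_ae (.of_forall fun x => by ring)
    _ = -∫ x in Icc a b, f x * fderiv ℝ (fun y => g y ^ 3) x (Pi.single α 1) :=
        integral_fderiv_single_mul_eq_neg_of_periodic hab (hf.of_le (by norm_num)) (hg.pow 3)
          hper fun x => by simp only [hgper x]
    _ = _ := by simp only [hcube]; rfl

theorem integral_fderiv_single_pow_four_le (hab : a ≤ b) (hf : ContDiff ℝ 2 f)
    (hper : Periodic f (Pi.single α (b α - a α))) {S : ℝ} (hS : ∀ x ∈ Icc a b, |f x| ≤ S) :
    ∫ x in Icc a b, fderiv ℝ f x (Pi.single α 1) ^ 4 ≤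
      3 * S * ∫ x in Icc a b, fderiv ℝ f x (Pi.single α 1) ^ 2 * ‖iteratedFDeriv ℝ 2 f x‖ := by
  set g := fun x => fderiv ℝ f x (Pi.single α 1)
  have hf' : ContDiff ℝ 1 (fderiv ℝ f) := hf.fderiv_right le_rfl
  have hg : ContDiff ℝ 1 g := hf'.clm_apply contDiff_const
  have hS0 : 0 ≤ S := (abs_nonneg _).trans (hS a ⟨le_rfl, hab⟩)
  have hfg (x) (hx : x ∈ Icc a b) :
      -(f x * fderiv ℝ g x (Pi.single α 1)) ≤ S * ‖iteratedFDeriv ℝ 2 f x‖ := by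
    have hsecond : |fderiv ℝ g x (Pi.single α 1)| ≤ ‖iteratedFDeriv ℝ 2 f x‖ := by
      simpa [Pi.norm_single] using norm_fderiv_fderiv_apply_le
        (hf'.differentiable one_ne_zero x) (Pi.single α (1 : ℝ)) (Pi.single α 1)
    refine (neg_le_abs _).trans ?_
    rw [abs_mul]
    exact mul_le_mul (hS x hx) hsecond (abs_nonneg _) hS0
  rw [integral_fderiv_single_pow_four_eq_neg hab hf hper, ← integral_neg,
    ← integral_const_mul]
  refine setIntegral_mono_on ?_ ?_ measurableSet_Icc fun x hx => ?_
  · exact (hf.continuous.mul ((continuous_const.mul (hg.continuous.pow 2)).mul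
      (hg.continuous_fderiv_apply_const _))).neg.integrableOn_Icc
  · exact (continuous_const.mul ((hg.continuous.pow 2).mul
      (hf.continuous_iteratedFDeriv le_rfl).norm)).integrableOn_Icc
  calc _ = 3 * g x ^ 2 * -(f x * fderiv ℝ g x (Pi.single α 1)) := by ring
    _ ≤ 3 * g x ^ 2 * (S * ‖iteratedFDeriv ℝ 2 f x‖) := by gcongr; exact hfg x hx
    _ = _ := by ring

theorem sqrt_integral_fderiv_single_pow_four_le (hab : a ≤ b) (hf : ContDiff ℝ 2 f)
    (hper : Periodic f (Pi.single α (b α - a α))) {S : ℝ} (hS : ∀ x ∈ Icc a b, |f x| ≤ S) :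
    √(∫ x in Icc a b, fderiv ℝ f x (Pi.single α 1) ^ 4) ≤
      3 * S * √(∫ x in Icc a b, ‖iteratedFDeriv ℝ 2 f x‖ ^ 2) := by
  have hbox : IsCompact (Icc a b) := isCompact_Icc
  have hg : Continuous fun x => fderiv ℝ f x (Pi.single α 1) ^ 2 :=
    ((hf.of_le (by norm_num)).continuous_fderiv_apply_const _).pow 2
  have hCS := integral_mul_le_sqrt_mul_sqrt (.of_forall fun x => sq_nonneg _)
    (.of_forall fun x => norm_nonneg _) (hg.memLp_restrict_of_isCompact (μ := volume) hbox 2)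
    ((hf.continuous_iteratedFDeriv le_rfl).norm.memLp_restrict_of_isCompact hbox 2)
  simp only [← pow_mul] at hCS
  have hS0 : 0 ≤ S := (abs_nonneg _).trans (hS a ⟨le_rfl, hab⟩)
  refine Real.sqrt_le_of_le_mul_sqrt (by positivity) ?_
  calc _ ≤ _ := integral_fderiv_single_pow_four_le hab hf hper hS
    _ ≤ _ := mul_le_mul_of_nonneg_left hCS (by positivity)
    _ = _ := by ring

end Box

/-- Gagliardo–Nirenberg interpolation on `T³`: there is `C` such that for every
`f ∈ W^{2,2}(T³) ∩ L^∞(T³)` and every direction `α`, `‖∂_α f‖_{L⁴}² ≤ C ‖f‖_∞ ‖f‖_{W^{2,2}}`. -/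
theorem gagliardo_nirenberg_step (L : ℝ) (hL : 0 < L) :
    ∃ C : ℝ, ∀ f : V3 → ℝ,
      ContDiff ℝ 2 f → (∀ (x : V3) (i : Fin 3), f (x + Pi.single i L) = f x) →
      ∀ α : Fin 3,
        (∫ x in Q3 L, (pd α f x) ^ 4) ^ ((1 : ℝ) / 2)
          ≤ C * (⨆ x : V3, |f x|) *
            Real.sqrt (∫ x in Q3 L,
              ((f x) ^ 2 + ‖fderiv ℝ f x‖ ^ 2 + ‖iteratedFDeriv ℝ 2 f x‖ ^ 2)) := by
  refine ⟨3, fun f hf hper α => ?_⟩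
  have hbox : Q3 L = Icc 0 fun _ => L := pi_univ_Icc _ _
  have hsup : ∀ x, |f x| ≤ ⨆ y, |f y| :=
    le_ciSup (bddAbove_range_abs_of_periodic hL hf.continuous fun i x => hper x i)
  have hsobolev : ∫ x in Q3 L, ‖iteratedFDeriv ℝ 2 f x‖ ^ 2 ≤
      ∫ x in Q3 L, (f x ^ 2 + ‖fderiv ℝ f x‖ ^ 2 + ‖iteratedFDeriv ℝ 2 f x‖ ^ 2) := by
    refine integral_mono_of_nonneg (.of_forall fun x => by positivity) ?_
      (.of_forall fun x => le_add_of_nonneg_left (by positivity))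
    rw [hbox]
    exact (((hf.continuous.pow 2).add ((hf.continuous_fderiv two_ne_zero).norm.pow 2)).add
      ((hf.continuous_iteratedFDeriv le_rfl).norm.pow 2)).integrableOn_Icc
  rw [← Real.sqrt_eq_rpow]
  calc √(∫ x in Q3 L, pd α f x ^ 4)
      ≤ 3 * (⨆ x, |f x|) * √(∫ x in Q3 L, ‖iteratedFDeriv ℝ 2 f x‖ ^ 2) := by
        rw [hbox]
        exact sqrt_integral_fderiv_single_pow_four_le (fun _ => hL.le) hf
          (by simpa using fun x => hper x α) fun x _ => hsup x
    _ ≤ _ := by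
        have hsup_nonneg := (abs_nonneg _).trans (hsup 0)
        gcongr
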